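/- arXiv:1502.06275 — 7 statements merged into one kernel-verified Lean document; each statement's English description precedes it below -/
import Mathlib

section
/- Suppose C is Hom-finite. Let U →u V →v W →h U[1] be a distinguished triangle in C that is right almost split, with W indecomposable having local endomorphism ring. Let M be an indecomposable object of C such that M is not isomorphic to W and M[1] is not isomorphic to W. Then dim_k Hom(M,U) + dim_k Hom(M,W) = dim_k Hom(M,V). -/
/-!
Apply `Hom(M, -)` to the triangle: `Hom(M,U) → Hom(M,V) → Hom(M,W)` is exact in the middle, so
the formula says that `v ∘ -` is onto and `u ∘ -` is one-to-one. In a pretriangulated category a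
split epimorphism from an indecomposable object onto a nonzero object is an isomorphism, so
almost-splitness makes every morphism `M ⟶ W` and every morphism `M⟦1⟧ ⟶ W` factor through `v`.
The first gives surjectivity. The second gives `g ≫ h = 0` for all `g : M⟦1⟧ ⟶ W`, and by the
exactness of the rotated triangle at `U⟦1⟧` this forces `a⟦1⟧ = 0` whenever `a ≫ u = 0`.
-/

open CategoryTheory Category Limits Pretriangulated

universe v u

theorem Module.finrank_add_finrank_of_exact {k V₁ V₂ V₃ : Type*} [DivisionRing k]
    [AddCommGroup V₁] [AddCommGroup V₂] [AddCommGroup V₃]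
    [Module k V₁] [Module k V₂] [Module k V₃] [FiniteDimensional k V₂]
    {f : V₁ →ₗ[k] V₂} {g : V₂ →ₗ[k] V₃} (hf : Function.Injective f)
    (hfg : Function.Exact f g) (hg : Function.Surjective g) :
    finrank k V₁ + finrank k V₃ = finrank k V₂ := by
  rw [← g.finrank_range_add_finrank_ker, LinearMap.range_eq_top.2 hg, finrank_top,
    hfg.linearMap_ker_eq, LinearMap.finrank_range_of_inj hf, add_comm]

namespace CategoryTheory

theorem Indecomposable.map_of_equivalence {C D : Type*} [Category C] [Category D]
    [Preadditive C] [Preadditive D] [HasBinaryBiproducts C] [HasBinaryBiproducts D]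
    (e : C ≌ D) [e.functor.Additive] {X : C} (hX : Indecomposable X) :
    Indecomposable (e.functor.obj X) := by
  have : PreservesBinaryBiproducts e.inverse :=
    preservesBinaryBiproducts_of_preservesBiproducts _
  have reflect {Y : D} (hY : IsZero (e.inverse.obj Y)) : IsZero Y :=
    IsZero.of_iso (e.functor.map_isZero hY) (e.counitIso.app Y).symm
  refine ⟨fun hz => hX.1 (IsZero.of_iso (e.inverse.map_isZero hz) (e.unitIso.app X)),
    fun Y Z i => ?_⟩
  exact (hX.2 _ _ (e.unitIso.app X ≪≫ e.inverse.mapIso i ≪≫ e.inverse.mapBiprod Y Z)).imp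
    reflect reflect

theorem Indecomposable.shift {C : Type*} [Category C] [Preadditive C] [HasBinaryBiproducts C]
    [HasShift C ℤ] {X : C} (hX : Indecomposable X) (n : ℤ) [(shiftFunctor C n).Additive] :
    Indecomposable (X⟦n⟧) :=
  have : (shiftEquiv C n).functor.Additive := inferInstanceAs (shiftFunctor C n).Additive
  hX.map_of_equivalence (shiftEquiv C n)

namespace Pretriangulated

variable {C : Type u} [Category.{v} C] [Preadditive C] [HasZeroObject C] [HasShift C ℤ]
  [∀ n : ℤ, (shiftFunctor C n).Additive] [Pretriangulated C]

theorem isIso_of_isSplitEpi_of_indecomposable {X W : C} (hX : Indecomposable X)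
    (hW : ¬ IsZero W) (f : X ⟶ W) [IsSplitEpi f] : IsIso f := by
  obtain ⟨N, p, δ, hT⟩ := distinguished_cocone_triangle (section_ f)
  -- the cone triangle of a split mono has zero third morphism, hence splits as `X ≅ W ⊞ N`
  obtain ⟨e, -, -⟩ := exists_iso_binaryBiproduct_of_distTriang _ hT
    (Triangle.mor₃_eq_zero_of_mono₁ _ hT (show Mono (section_ f) from inferInstance))
  have hN : IsZero N := (hX.2 _ _ e).resolve_left hW
  have : IsIso (section_ f) := (Triangle.isZero₃_iff_isIso₁ _ hT).1 hN
  exact IsIso.of_epi_section f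

theorem eq_zero_of_comp_distTriang_mor₁_eq_zero {T : Triangle C} (hT : T ∈ distTriang C)
    {X : C} (hX : ∀ g : X⟦(1 : ℤ)⟧ ⟶ T.obj₃, g ≫ T.mor₃ = 0) (a : X ⟶ T.obj₁)
    (ha : a ≫ T.mor₁ = 0) : a = 0 := by
  apply (shiftFunctor C (1 : ℤ)).map_injective
  obtain ⟨g, hg⟩ := Triangle.coyoneda_exact₃ _ (rot_of_distTriang _ hT) (a⟦(1 : ℤ)⟧')
    (by change a⟦(1 : ℤ)⟧' ≫ (-T.mor₁⟦(1 : ℤ)⟧') = 0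
        rw [Preadditive.comp_neg, ← Functor.map_comp, ha, Functor.map_zero, neg_zero])
  rw [Functor.map_zero]
  exact hg.trans (hX g)

theorem exact_rightComp_distTriang_mor₁_mor₂ (R : Type*) [Semiring R] [Linear R C]
    {T : Triangle C} (hT : T ∈ distTriang C) (X : C) :
    Function.Exact (Linear.rightComp R X T.mor₁) (Linear.rightComp R X T.mor₂) := by
  intro f
  constructor
  · intro hf
    obtain ⟨g, hg⟩ := Triangle.coyoneda_exact₂ _ hT f hf
    exact ⟨g, hg.symm⟩
  · rintro ⟨g, rfl⟩
    simp [comp_distTriang_mor_zero₁₂ _ hT]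

theorem finrank_hom_distTriang_obj₁_add_obj₃ (k : Type*) [DivisionRing k] [Linear k C]
    {T : Triangle C} (hT : T ∈ distTriang C) (X : C) [FiniteDimensional k (X ⟶ T.obj₂)]
    (h₃ : ∀ f : X ⟶ T.obj₃, ∃ g, g ≫ T.mor₂ = f)
    (h₁ : ∀ g : X⟦(1 : ℤ)⟧ ⟶ T.obj₃, g ≫ T.mor₃ = 0) :
    Module.finrank k (X ⟶ T.obj₁) + Module.finrank k (X ⟶ T.obj₃) =
      Module.finrank k (X ⟶ T.obj₂) :=
  Module.finrank_add_finrank_of_exact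
    ((injective_iff_map_eq_zero _).2 (eq_zero_of_comp_distTriang_mor₁_eq_zero hT h₁))
    (exact_rightComp_distTriang_mor₁_mor₂ k hT X) h₃

end Pretriangulated

end CategoryTheory

/-- Suppose the `k`-linear pretriangulated category `C` is Hom-finite.
Let `U ⟶ V ⟶ W ⟶ U⟦1⟧` be a distinguished triangle that is right almost split, with `W`
indecomposable having local endomorphism ring. If `M` is an indecomposable object with
`M ≇ W` and `M⟦1⟧ ≇ W`, then
`dim Hom(M,U) + dim Hom(M,W) = dim Hom(M,V)`. -/
theorem dim_hom_additive_on_right_almost_split_triangle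
    (k : Type*) [Field k] {C : Type u} [Category.{v} C] [Preadditive C] [Linear k C]
    [HasZeroObject C] [HasShift C ℤ] [∀ n : ℤ, (shiftFunctor C n).Additive]
    [Pretriangulated C] [HasBinaryBiproducts C]
    [∀ X Y : C, FiniteDimensional k (X ⟶ Y)]
    {U V W : C} (u : U ⟶ V) (v : V ⟶ W) (h : W ⟶ U⟦(1 : ℤ)⟧)
    (hdist : Triangle.mk u v h ∈ distTriang C)
    (hras : ∀ (X : C) (f : X ⟶ W), ¬ IsSplitEpi f → ∃ g : X ⟶ V, g ≫ v = f)
    (hW : Indecomposable W) (hWloc : IsLocalRing (End W))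
    (M : C) (hM : Indecomposable M)
    (hMW : ¬ Nonempty (M ≅ W)) (hMW1 : ¬ Nonempty (M⟦(1 : ℤ)⟧ ≅ W)) :
    Module.finrank k (M ⟶ U) + Module.finrank k (M ⟶ W) = Module.finrank k (M ⟶ V) := by
  have factors {X : C} (hX : Indecomposable X) (hXW : ¬ Nonempty (X ≅ W)) (f : X ⟶ W) :
      ∃ g : X ⟶ V, g ≫ v = f :=
    hras X f fun _ =>
      have := isIso_of_isSplitEpi_of_indecomposable hX hW.1 f
      hXW ⟨asIso f⟩
  refine finrank_hom_distTriang_obj₁_add_obj₃ k hdist M (factors hM hMW) fun g => ?_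
  obtain ⟨g', rfl⟩ := factors (hM.shift 1) hMW1 g
  exact (assoc _ _ _).trans ((g' ≫= comp_distTriang_mor_zero₂₃ _ hdist).trans comp_zero)
end

section
/- Let U →u V →v W →h U[1] be a distinguished triangle in C that is right almost split, with h ≠ 0 and W indecomposable having local endomorphism ring. Then for every endomorphism f : W → W, one has h ∘ f = 0 if and only if f is not an isomorphism. Consequently, the kernel of the k-linear map End(W) → Hom(W, U[1]) given by f ↦ h ∘ f is exactly the set of non-invertible endomorphisms of W (the radical of the local ring End(W)). -/
open CategoryTheory Category Limits Pretriangulated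

universe v u

/-- In a local ring, a one-sided inverse is a two-sided inverse. -/
lemma mul_eq_one_of_mul_eq_one_of_local {R : Type*} [Ring R] [IsLocalRing R]
    {a b : R} (hab : a * b = 1) : b * a = 1 := by
  have he : (b * a) * (b * a) = b * a := by
    rw [mul_assoc, ← mul_assoc a, hab, one_mul]
  rcases IsLocalRing.isUnit_or_isUnit_of_add_one (a := b * a) (b := 1 - b * a)
      (by abel) with hu | hu
  · have : (b * a) * (b * a) = (b * a) * 1 := by rw [mul_one, he]
    exact hu.mul_left_cancel this
  · exfalso
    have h0 : (1 - b * a) * (b * a) = (1 - b * a) * 0 := by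
      rw [mul_zero, sub_mul, one_mul, he, sub_self]
    have hba : b * a = 0 := hu.mul_left_cancel h0
    have ha : a = 0 := by
      have : a * (b * a) = a := by rw [← mul_assoc, hab, one_mul]
      rw [hba, mul_zero] at this; exact this.symm
    rw [ha, zero_mul] at hab
    exact one_ne_zero hab.symm

/-- Let `U ⟶ V ⟶ W ⟶ U⟦1⟧` be a distinguished triangle in a `k`-linear
pretriangulated category that is right almost split, with `h ≠ 0` and `W` indecomposable
having local endomorphism ring. Then for every endomorphism `f : W ⟶ W`, one has
`f ≫ h = 0` if and only if `f` is not an isomorphism; consequently the kernel of the map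
`f ↦ f ≫ h` on `End W` is exactly the set of non-invertible endomorphisms of `W`. -/
theorem kernel_of_connecting_precomposition_eq_radical
    (k : Type*) [Field k] {C : Type u} [Category.{v} C] [Preadditive C] [Linear k C]
    [HasZeroObject C] [HasShift C ℤ] [∀ n : ℤ, (shiftFunctor C n).Additive]
    [Pretriangulated C] [HasBinaryBiproducts C]
    {U V W : C} (u : U ⟶ V) (v : V ⟶ W) (h : W ⟶ U⟦(1 : ℤ)⟧)
    (hdist : Triangle.mk u v h ∈ distTriang C)
    (hras : ∀ (X : C) (f : X ⟶ W), ¬ IsSplitEpi f → ∃ g : X ⟶ V, g ≫ v = f)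
    (hne : h ≠ 0) (hW : Indecomposable W) (hWloc : IsLocalRing (End W)) :
    (∀ f : W ⟶ W, f ≫ h = 0 ↔ ¬ IsIso f) ∧
      {f : W ⟶ W | f ≫ h = 0} = {f : W ⟶ W | ¬ IsIso f} := by
  have key : ∀ f : W ⟶ W, f ≫ h = 0 ↔ ¬ IsIso f := by
    intro f
    constructor
    · intro hf hiso
      apply hne
      calc h = inv f ≫ (f ≫ h) := by simp
      _ = 0 := by rw [hf, comp_zero]
    · intro hniso
      have hnse : ¬ IsSplitEpi f := by
        intro hse
        apply hniso
        obtain ⟨s⟩ := hse.exists_splitEpi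
        -- In `End W`, `s.section_ ≫ f = f * s.section_`.
        let ff : End W := f
        let ss : End W := s.section_
        have h1 : ff * ss = 1 := s.id
        have h2 : ss * ff = 1 := mul_eq_one_of_mul_eq_one_of_local h1
        exact ⟨⟨s.section_, h2, s.id⟩⟩
      obtain ⟨g, hg⟩ := hras W f hnse
      have hvh : v ≫ h = 0 := comp_distTriang_mor_zero₂₃ _ hdist
      rw [← hg, assoc, hvh, comp_zero]
  exact ⟨key, Set.ext fun f => key f⟩
end

section
/- Suppose C is Hom-finite. Let U →u V →v W →h U[1] be a distinguished triangle in C that is right almost split, with h ≠ 0 and W indecomposable having local endomorphism ring, and suppose W is not isomorphic to W[1]. Let d = dim_k End(W)/Rad End(W), where Rad End(W) denotes the set of non-invertible endomorphisms of W (a two-sided ideal of the local ring End(W)). Then dim_k Hom(W,U) + dim_k End(W) = dim_k Hom(W,V) + d. -/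
open CategoryTheory Category Limits Pretriangulated

universe v u

/-- In a (possibly noncommutative) local ring, idempotents are `0` or `1`. -/
lemma aux_idem_local {A : Type*} [Ring A] [IsLocalRing A] {e : A} (he : e * e = e) :
    e = 0 ∨ e = 1 := by
  rcases IsLocalRing.isUnit_or_isUnit_of_add_one (a := e) (b := 1 - e) (by abel) with hu | hu
  · right
    exact hu.mul_left_cancel (by rw [he, mul_one])
  · left
    have h2 : (1 - e) * (1 - e) = (1 - e) * 1 := by
      rw [mul_sub, mul_one, sub_mul, one_mul, he]
      abel
    have h3 := hu.mul_left_cancel h2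
    exact sub_eq_self.mp h3
/-- In a local ring, a one-sided inverse makes an element a unit. -/
lemma aux_unit_local {A : Type*} [Ring A] [IsLocalRing A] {a b : A} (hab : a * b = 1) :
    IsUnit a := by
  have he : (b * a) * (b * a) = b * a := by
    rw [mul_assoc, ← mul_assoc a b a, hab, one_mul]
  rcases aux_idem_local he with h0 | h1
  · have : (1 : A) = 0 := by
      calc (1 : A) = (a * b) * (a * b) := by rw [hab, one_mul]
        _ = a * ((b * a) * b) := by rw [mul_assoc, ← mul_assoc b a b]
        _ = 0 := by rw [h0, zero_mul, mul_zero]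
    exact absurd this one_ne_zero
  · exact ⟨⟨a, b, hab, h1⟩, rfl⟩

/-- Suppose the `k`-linear pretriangulated category `C` is Hom-finite.
Let `U ⟶ V ⟶ W ⟶ U⟦1⟧` be a distinguished triangle that is right almost split, with
`h ≠ 0` and `W` indecomposable with local endomorphism ring, and suppose `W ≇ W⟦1⟧`.
Let `R` be the radical of `End W`, i.e. the (`k`-subspace and two-sided ideal of the
local ring `End W`) consisting of the non-invertible endomorphisms of `W`, and let
`d = dim (End W)/R`. Then `dim Hom(W,U) + dim End(W) = dim Hom(W,V) + d`. -/
theorem dim_hom_defect_right_almost_split_of_not_iso_shift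
    (k : Type*) [Field k] {C : Type u} [Category.{v} C] [Preadditive C] [Linear k C]
    [HasZeroObject C] [HasShift C ℤ] [∀ n : ℤ, (shiftFunctor C n).Additive]
    [Pretriangulated C] [HasBinaryBiproducts C]
    [∀ X Y : C, FiniteDimensional k (X ⟶ Y)]
    {U V W : C} (u : U ⟶ V) (v : V ⟶ W) (h : W ⟶ U⟦(1 : ℤ)⟧)
    (hdist : Triangle.mk u v h ∈ distTriang C)
    (hras : ∀ (X : C) (f : X ⟶ W), ¬ IsSplitEpi f → ∃ g : X ⟶ V, g ≫ v = f)
    (hne : h ≠ 0) (hW : Indecomposable W) (hWloc : IsLocalRing (End W))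
    (hshift : ¬ Nonempty (W ≅ W⟦(1 : ℤ)⟧))
    (R : Submodule k (W ⟶ W)) (hR : (R : Set (W ⟶ W)) = {f : W ⟶ W | ¬ IsIso f}) :
    Module.finrank k (W ⟶ U) + Module.finrank k (W ⟶ W) =
      Module.finrank k (W ⟶ V) + Module.finrank k ((W ⟶ W) ⧸ R) := by
  have hvh : v ≫ h = 0 := comp_distTriang_mor_zero₂₃ _ hdist
  have huv : u ≫ v = 0 := comp_distTriang_mor_zero₁₂ _ hdist
  have hmemR : ∀ f : W ⟶ W, f ∈ R ↔ ¬ IsIso f := by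
    intro f
    constructor
    · intro hf hiso
      have : f ∈ (R : Set (W ⟶ W)) := hf
      rw [hR] at this
      exact this hiso
    · intro hf
      show f ∈ (R : Set (W ⟶ W))
      rw [hR]; exact hf
  set f1 : (W ⟶ U) →ₗ[k] (W ⟶ V) := Linear.rightComp k W u with hf1
  set f2 : (W ⟶ V) →ₗ[k] (W ⟶ W) := Linear.rightComp k W v with hf2
  -- injectivity of `- ≫ u`
  have hinj : Function.Injective f1 := by
    rw [injective_iff_map_eq_zero]
    intro φ hφ
    have hφu : φ ≫ u = 0 := hφ
    have hfu : ((shiftFunctor C (1 : ℤ)).map φ) ≫ (shiftFunctor C (1 : ℤ)).map u = 0 := by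
      rw [← Functor.map_comp, hφu, Functor.map_zero]
    obtain ⟨g, hg⟩ := Triangle.coyoneda_exact₁ _ hdist ((shiftFunctor C (1 : ℤ)).map φ) hfu
    obtain ⟨g, hg'⟩ : ∃ g' : W⟦(1 : ℤ)⟧ ⟶ W, (shiftFunctor C (1 : ℤ)).map φ = g' ≫ h := ⟨g, hg⟩
    clear hg
    -- `g : W⟦1⟧ ⟶ W`, `φ⟦1⟧ = g ≫ h`
    have hgse : ¬ IsSplitEpi g := by
      intro hsplit
      obtain ⟨⟨s, hs⟩⟩ := hsplit.exists_splitEpi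
      have hs' : s ≫ g = 𝟙 W := hs
      set e₀ : W ⟶ W := (shiftFunctor C (1 : ℤ)).preimage (g ≫ s) with he₀def
      have hmap : (shiftFunctor C (1 : ℤ)).map e₀ = g ≫ s := Functor.map_preimage _ _
      have key : (g ≫ s) ≫ g ≫ s = g ≫ s := by
        rw [← assoc, assoc g s g, hs', comp_id]
      have hid : e₀ ≫ e₀ = e₀ := by
        apply (shiftFunctor C (1 : ℤ)).map_injective
        rw [Functor.map_comp, hmap, key]
      let eE : End W := e₀
      have hidem : eE * eE = eE := hid
      rcases aux_idem_local (A := End W) hidem with h0 | h1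
      · -- then `𝟙 W = 0`, contradicting `h ≠ 0`
        have h0' : e₀ = 0 := h0
        have hgs0 : g ≫ s = 0 := by
          rw [← hmap, h0']
          exact (shiftFunctor C (1 : ℤ)).map_zero W W
        have hz : 𝟙 W = (0 : W ⟶ W) := by
          calc 𝟙 W = (s ≫ g) ≫ s ≫ g := by rw [hs', id_comp]
            _ = s ≫ (g ≫ s) ≫ g := by simp only [assoc]
            _ = 0 := by rw [hgs0, zero_comp, comp_zero]
        exact hne (by rw [← id_comp h, hz, zero_comp])
      · -- then `g` is an isomorphism, contradicting `W ≇ W⟦1⟧`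
        have h1' : e₀ = 𝟙 W := h1
        have hgs1 : g ≫ s = 𝟙 (W⟦(1 : ℤ)⟧) := by
          rw [← hmap, h1']
          exact (shiftFunctor C (1 : ℤ)).map_id W
        exact hshift ⟨⟨s, g, hs', hgs1⟩⟩
    obtain ⟨t, ht⟩ := hras _ g hgse
    have : (shiftFunctor C (1 : ℤ)).map φ = 0 := by
      rw [hg', ← ht, assoc, hvh, comp_zero]
    apply (shiftFunctor C (1 : ℤ)).map_injective
    rw [this, Functor.map_zero]
  -- exactness : ker f2 = range f1
  have hex : LinearMap.ker f2 = LinearMap.range f1 := by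
    ext f
    simp only [LinearMap.mem_ker, LinearMap.mem_range]
    constructor
    · intro hf
      obtain ⟨g, hg⟩ := Triangle.coyoneda_exact₂ _ hdist f hf
      exact ⟨g, hg.symm⟩
    · rintro ⟨g, rfl⟩
      show (g ≫ u) ≫ v = 0
      rw [assoc, huv, comp_zero]
  -- range f2 = R
  have hrange : LinearMap.range f2 = R := by
    ext f
    simp only [LinearMap.mem_range]
    rw [hmemR]
    constructor
    · rintro ⟨g, rfl⟩ hiso
      replace hiso : IsIso (g ≫ v) := hiso
      have hsec : (inv (g ≫ v) ≫ g) ≫ v = 𝟙 W := by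
        rw [assoc, IsIso.inv_hom_id]
      apply hne
      rw [← id_comp h, ← hsec, assoc, assoc, hvh, comp_zero, comp_zero]
    · intro hf
      have hnse : ¬ IsSplitEpi f := by
        intro hsplit
        obtain ⟨⟨s, hs⟩⟩ := hsplit.exists_splitEpi
        -- in `End W`, `f * s = s ≫ f = 1`
        let fE : End W := f
        let sE : End W := s
        have hfs : fE * sE = 1 := hs
        have := aux_unit_local (A := End W) hfs
        exact hf ((isUnit_iff_isIso fE).mp this)
      exact hras _ f hnse
  -- dimension count
  have e1 := LinearMap.finrank_range_add_finrank_ker f2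
  have e2 := Submodule.finrank_quotient_add_finrank R
  have e3 : Module.finrank k (LinearMap.ker f2) = Module.finrank k (W ⟶ U) := by
    rw [hex, LinearMap.finrank_range_of_inj hinj]
  rw [hrange] at e1
  omega
end

section
/- Suppose C is Hom-finite. Let U →u V →v W →h U[1] be a distinguished triangle in C that is right almost split, with h ≠ 0 and W indecomposable having local endomorphism ring, and suppose W is isomorphic to W[1]. Let d = dim_k End(W)/Rad End(W), where Rad End(W) denotes the set of non-invertible endomorphisms of W (a two-sided ideal of the local ring End(W)). Then dim_k Hom(W,U) + dim_k End(W) = dim_k Hom(W,V) + 2d. -/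
open CategoryTheory Category Limits Pretriangulated

universe v u

/-!
Applying `Hom(W, -)` to the triangle and its two inverse rotations gives an exact sequence
`Hom(W, V⟦-1⟧) → Hom(W, W⟦-1⟧) → Hom(W, U) → Hom(W, V) → End W`. Since `v` is right almost split
and `End W` is Dedekind-finite, the image of the last map is exactly the radical `R`. Up to
isomorphisms the first map is composition with `v⟦-1⟧'`, which is again right almost split, so
through `W⟦-1⟧ ≅ W` its image has dimension `dim R` as well. Counting dimensions along the
sequence, with `dim End W = d + dim R`, gives the formula.
-/

theorem Module.finrank_add_finrank_range_add_finrank_range_of_exact {K : Type*} [DivisionRing K]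
    {M₁ M₂ M₃ M₄ M₅ : Type*} [AddCommGroup M₁] [AddCommGroup M₂] [AddCommGroup M₃]
    [AddCommGroup M₄] [AddCommGroup M₅] [Module K M₁] [Module K M₂] [Module K M₃] [Module K M₄]
    [Module K M₅] [FiniteDimensional K M₂] [FiniteDimensional K M₃] [FiniteDimensional K M₄]
    {f₁ : M₁ →ₗ[K] M₂} {f₂ : M₂ →ₗ[K] M₃} {f₃ : M₃ →ₗ[K] M₄} {f₄ : M₄ →ₗ[K] M₅}
    (h₁₂ : Function.Exact f₁ f₂) (h₂₃ : Function.Exact f₂ f₃) (h₃₄ : Function.Exact f₃ f₄) :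
    finrank K M₃ + finrank K (LinearMap.range f₁) + finrank K (LinearMap.range f₄) =
      finrank K M₂ + finrank K M₄ := by
  have rank_nullity₂ := f₂.finrank_range_add_finrank_ker
  have rank_nullity₃ := f₃.finrank_range_add_finrank_ker
  have rank_nullity₄ := f₄.finrank_range_add_finrank_ker
  rw [h₁₂.linearMap_ker_eq] at rank_nullity₂
  rw [h₂₃.linearMap_ker_eq] at rank_nullity₃
  rw [h₃₄.linearMap_ker_eq] at rank_nullity₄
  omega

namespace CategoryTheory

variable {C : Type u} [Category.{v} C]

lemma End.isIso_of_isSplitEpi {X : C} [IsDedekindFiniteMonoid (End X)] (f : X ⟶ X)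
    [IsSplitEpi f] : IsIso f :=
  ⟨section_ f, mul_eq_one_symm (M := End X) (IsSplitEpi.id f), IsSplitEpi.id f⟩

structure IsRightAlmostSplit {V W : C} (v : V ⟶ W) : Prop where
  not_isSplitEpi : ¬ IsSplitEpi v
  exists_comp_eq : ∀ (X : C) (f : X ⟶ W), ¬ IsSplitEpi f → ∃ g : X ⟶ V, g ≫ v = f

namespace IsRightAlmostSplit

variable {V W : C} {v : V ⟶ W}

lemma comp_iso (hv : IsRightAlmostSplit v) {W' : C} (e : W ≅ W') :
    IsRightAlmostSplit (v ≫ e.hom) where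
  not_isSplitEpi _ :=
    hv.not_isSplitEpi (by simpa using (inferInstance : IsSplitEpi ((v ≫ e.hom) ≫ e.inv)))
  exists_comp_eq X f hf := by
    obtain ⟨g, hg⟩ := hv.exists_comp_eq X (f ≫ e.inv) fun _ =>
      hf (by simpa using (inferInstance : IsSplitEpi ((f ≫ e.inv) ≫ e.hom)))
    exact ⟨g, by rw [← assoc, hg, assoc, e.inv_hom_id, comp_id]⟩

lemma map (hv : IsRightAlmostSplit v) {D : Type*} [Category D] (F : C ⥤ D) [F.IsEquivalence] :
    IsRightAlmostSplit (F.map v) where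
  not_isSplitEpi h := hv.not_isSplitEpi ((F.isSplitEpi_iff v).1 h)
  exists_comp_eq X f hf := by
    let i := F.objObjPreimageIso X
    obtain ⟨g, hg⟩ := hv.exists_comp_eq _ (F.preimage (i.hom ≫ f)) fun h => hf (by
      have : IsSplitEpi (i.hom ≫ f) := by simpa using (F.isSplitEpi_iff _).2 h
      simpa using (inferInstance : IsSplitEpi (i.inv ≫ i.hom ≫ f)))
    exact ⟨i.inv ≫ F.map g, by rw [assoc, ← F.map_comp, hg, F.map_preimage, Iso.inv_hom_id_assoc]⟩

lemma range_comp_eq [IsDedekindFiniteMonoid (End W)] (hv : IsRightAlmostSplit v) :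
    Set.range (fun g : W ⟶ V => g ≫ v) = {f | ¬ IsIso f} := by
  ext f
  constructor
  · rintro ⟨g, rfl⟩ _
    exact hv.not_isSplitEpi (IsSplitEpi.mk' ⟨inv (g ≫ v) ≫ g, by simp⟩)
  · exact fun hf => hv.exists_comp_eq W f fun _ => hf (End.isIso_of_isSplitEpi f)

lemma neg [Preadditive C] (hv : IsRightAlmostSplit v) : IsRightAlmostSplit (-v) := by
  simpa using hv.comp_iso { hom := -𝟙 W, inv := -𝟙 W }

variable [Preadditive C] [HasShift C ℤ] {T : Triangle C}

lemma invRotate_mor₃ (hT : IsRightAlmostSplit T.mor₂) : IsRightAlmostSplit T.invRotate.mor₃ :=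
  hT.comp_iso ((shiftEquiv C (1 : ℤ)).counitIso.app T.obj₃).symm

lemma invRotate_mor₁ (hT : IsRightAlmostSplit T.mor₃) : IsRightAlmostSplit T.invRotate.mor₁ :=
  ((hT.map (shiftFunctor C (-1 : ℤ))).comp_iso ((shiftEquiv C (1 : ℤ)).unitIso.app _).symm).neg

end IsRightAlmostSplit

lemma Linear.finrank_range_rightComp_comp_iso (k : Type*) [Semiring k] [Preadditive C]
    [Linear k C] (X : C) {Y Z Z' : C} (f : Y ⟶ Z) (e : Z ≅ Z') :
    Module.finrank k (LinearMap.range (rightComp k X (f ≫ e.hom))) =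
      Module.finrank k (LinearMap.range (rightComp k X f)) := by
  let E := homCongr k (Iso.refl X) e
  have : rightComp k X (f ≫ e.hom) = E.toLinearMap ∘ₗ rightComp k X f := by
    ext g
    simp [E, homCongr_apply]
  rw [this, LinearMap.range_comp, E.finrank_map_eq]

lemma Pretriangulated.exact_rightComp_mor₁_mor₂ (k : Type*) [Semiring k] [Preadditive C]
    [Linear k C] [HasZeroObject C] [HasShift C ℤ] [∀ n : ℤ, (shiftFunctor C n).Additive]
    [Pretriangulated C] (T : Triangle C) (hT : T ∈ distTriang C) (X : C) :
    Function.Exact (Linear.rightComp k X T.mor₁) (Linear.rightComp k X T.mor₂) := fun f => by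
  constructor
  · intro hf
    obtain ⟨g, rfl⟩ := T.coyoneda_exact₂ hT f hf
    exact ⟨g, rfl⟩
  · rintro ⟨g, rfl⟩
    simp [comp_distTriang_mor_zero₁₂ T hT]

end CategoryTheory

/-- Suppose the `k`-linear pretriangulated category `C` is Hom-finite.
Let `U ⟶ V ⟶ W ⟶ U⟦1⟧` be a distinguished triangle that is right almost split, with
`h ≠ 0` and `W` indecomposable with local endomorphism ring, and suppose `W ≅ W⟦1⟧`.
Let `R` be the radical of `End W` (the non-invertible endomorphisms of `W`) and
`d = dim (End W)/R`. Then `dim Hom(W,U) + dim End(W) = dim Hom(W,V) + 2d`. -/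
theorem dim_hom_defect_right_almost_split_of_iso_shift
    (k : Type*) [Field k] {C : Type u} [Category.{v} C] [Preadditive C] [Linear k C]
    [HasZeroObject C] [HasShift C ℤ] [∀ n : ℤ, (shiftFunctor C n).Additive]
    [Pretriangulated C] [HasBinaryBiproducts C]
    [∀ X Y : C, FiniteDimensional k (X ⟶ Y)]
    {U V W : C} (u : U ⟶ V) (v : V ⟶ W) (h : W ⟶ U⟦(1 : ℤ)⟧)
    (hdist : Triangle.mk u v h ∈ distTriang C)
    (hras : ∀ (X : C) (f : X ⟶ W), ¬ IsSplitEpi f → ∃ g : X ⟶ V, g ≫ v = f)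
    (hne : h ≠ 0) (hW : Indecomposable W) (hWloc : IsLocalRing (End W))
    (hshift : Nonempty (W ≅ W⟦(1 : ℤ)⟧))
    (R : Submodule k (W ⟶ W)) (hR : (R : Set (W ⟶ W)) = {f : W ⟶ W | ¬ IsIso f}) :
    Module.finrank k (W ⟶ U) + Module.finrank k (W ⟶ W) =
      Module.finrank k (W ⟶ V) + 2 * Module.finrank k ((W ⟶ W) ⧸ R) := by
  have : Module.Finite k (End W) := (inferInstance : FiniteDimensional k (W ⟶ W))
  -- Artinian, hence Dedekind-finite: one-sided inverses in `End W` are two-sided.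
  have : IsArtinianRing (End W) := .of_finite k (End W)
  obtain ⟨e⟩ := hshift
  let e' : W⟦(-1 : ℤ)⟧ ≅ W := (shiftFunctor C (-1 : ℤ)).mapIso e ≪≫ shiftShiftNeg W 1
  set T := Triangle.mk u v h
  have hv : IsRightAlmostSplit v :=
    ⟨fun _ => hne (T.mor₃_eq_zero_of_epi₂ hdist (inferInstance : Epi v)), hras⟩
  have range_eq {V' : C} {p : V' ⟶ W} (hp : IsRightAlmostSplit p) :
      LinearMap.range (Linear.rightComp k W p) = R :=
    SetLike.coe_injective (hp.range_comp_eq.trans hR.symm)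
  have hseq : Module.finrank k (W ⟶ U) +
      Module.finrank k (LinearMap.range (Linear.rightComp k W T.invRotate.invRotate.mor₁)) +
      Module.finrank k (LinearMap.range (Linear.rightComp k W v)) =
      Module.finrank k (W ⟶ W⟦(-1 : ℤ)⟧) + Module.finrank k (W ⟶ V) :=
    Module.finrank_add_finrank_range_add_finrank_range_of_exact
      (exact_rightComp_mor₁_mor₂ k _ (inv_rot_of_distTriang _ (inv_rot_of_distTriang _ hdist)) W)
      (exact_rightComp_mor₁_mor₂ k _ (inv_rot_of_distTriang _ hdist) W)
      (exact_rightComp_mor₁_mor₂ k _ hdist W)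
  have hrange : Module.finrank k
      (LinearMap.range (Linear.rightComp k W T.invRotate.invRotate.mor₁)) = Module.finrank k R := by
    rw [← range_eq ((IsRightAlmostSplit.invRotate_mor₃ (T := T) hv).invRotate_mor₁.comp_iso e')]
    exact (Linear.finrank_range_rightComp_comp_iso k W _ e').symm
  rw [hrange, range_eq hv, (Linear.homCongr k (Iso.refl W) e').finrank_eq] at hseq
  have := R.finrank_quotient_add_finrank
  omega
end

section
/- Suppose C is Hom-finite. Let U →u V →v W →h U[1] be a distinguished triangle in C that is left almost split, with h ≠ 0 and U indecomposable having local endomorphism ring, and suppose U is not isomorphic to U[1]. Let d = dim_k End(U)/Rad End(U), where Rad End(U) denotes the set of non-invertible endomorphisms of U (a two-sided ideal of the local ring End(U)). Then dim_k End(U) + dim_k Hom(W,U) = dim_k Hom(V,U) + d. -/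
open CategoryTheory Category Limits Pretriangulated

universe v u

/-!
Precomposition with `u` and `v` gives a sequence `0 → Hom(W,U) → Hom(V,U) → End U`, exact at
`Hom(V,U)` since the triangle is distinguished. As `u` is left almost split and not a split mono
(because `h ≠ 0`), the image of `u^*` is the set of non-split monomorphisms `U ⟶ U`, which are
the non-isomorphisms since `End U` is local. A map `W ⟶ U` killed by `v^*` has the form `h ≫ g`
with `g : U⟦1⟧ ⟶ U`; such a `g` is not a split mono (it would be an isomorphism), and the almost
split property, transported along the shift adjunction, forces `h ≫ g = 0`. So `v^*` is injective
and counting dimensions gives the formula.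
-/

namespace CategoryTheory

variable {C : Type u} [Category.{v} C]

def IsLeftAlmostSplit {U V : C} (u : U ⟶ V) : Prop :=
  ∀ (X : C) (g : U ⟶ X), ¬ IsSplitMono g → ∃ t : V ⟶ X, u ≫ t = g

section Preadditive

variable [Preadditive C]

lemma isIso_or_isZero_of_isSplitMono_of_isLocalRing_end {X Y : C} [IsLocalRing (End Y)]
    (f : X ⟶ Y) [IsSplitMono f] : IsIso f ∨ IsZero X := by
  rcases IsLocalRing.isUnit_or_isUnit_of_add_one
    (add_sub_cancel (show End Y from retraction f ≫ f) 1) with he | he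
  · rw [isUnit_iff_isIso] at he
    have : IsSplitEpi f := ⟨⟨inv (retraction f ≫ f) ≫ retraction f, by simp⟩⟩
    exact .inl (isIso_of_mono_of_isSplitEpi f)
  · rw [isUnit_iff_isIso] at he
    have hf : f = 0 := (cancel_mono (𝟙 Y - retraction f ≫ f)).1 (by
      change f ≫ (𝟙 Y - retraction f ≫ f) = 0 ≫ _
      simp)
    exact .inr (IsZero.of_mono_eq_zero f hf)

lemma isSplitMono_iff_isIso_of_isLocalRing_end {X : C} [IsLocalRing (End X)] (f : X ⟶ X) :
    IsSplitMono f ↔ IsIso f := by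
  refine ⟨fun _ => (isIso_or_isZero_of_isSplitMono_of_isLocalRing_end f).resolve_right ?_,
    fun _ => inferInstance⟩
  exact fun hX => one_ne_zero (show (1 : End X) = 0 from (IsZero.iff_id_eq_zero X).1 hX)

lemma IsLeftAlmostSplit.range_leftComp (k : Type*) [Semiring k] [Linear k C] {U V : C}
    {u : U ⟶ V} (hlas : IsLeftAlmostSplit u) (hu : ¬ IsSplitMono u) (Y : C) :
    (LinearMap.range (Linear.leftComp k Y u) : Set (U ⟶ Y)) = {f | ¬ IsSplitMono f} := by
  ext f
  constructor
  · rintro ⟨t, rfl⟩ ⟨⟨r, hr⟩⟩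
    exact hu ⟨⟨t ≫ r, by simpa using hr⟩⟩
  · exact hlas Y f

end Preadditive

section Pretriangulated

variable [Preadditive C] [HasZeroObject C] [HasShift C ℤ]
  [∀ n : ℤ, (shiftFunctor C n).Additive] [Pretriangulated C]

lemma IsLeftAlmostSplit.mor₃_comp_eq_zero {T : Triangle C} (hT : T ∈ distTriang C)
    (hlas : IsLeftAlmostSplit T.mor₁) {X : C} (g : T.obj₁⟦(1 : ℤ)⟧ ⟶ X)
    (hg : ¬ IsSplitMono g) : T.mor₃ ≫ g = 0 := by
  let adj : shiftFunctor C (1 : ℤ) ⊣ shiftFunctor C (-1) := (shiftEquiv C (1 : ℤ)).toAdjunction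
  let ψ := adj.homEquiv _ _ g
  have hg_eq : g = ψ⟦(1 : ℤ)⟧' ≫ adj.counit.app X :=
    ((adj.homEquiv _ _).symm_apply_apply g).symm.trans (adj.homEquiv_counit _ _ _)
  obtain ⟨t, ht⟩ := hlas _ ψ fun ⟨⟨r, hr⟩⟩ => hg ⟨⟨inv (adj.counit.app X) ≫ r⟦(1 : ℤ)⟧', by
    rw [hg_eq, assoc, IsIso.hom_inv_id_assoc, ← Functor.map_comp, hr, Functor.map_id]⟩⟩
  rw [hg_eq, ← ht, Functor.map_comp, assoc]
  exact (comp_distTriang_mor_zero₃₁_assoc _ hT _).trans zero_comp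

variable (k : Type*) [Semiring k] [Linear k C]

lemma Triangle.ker_leftComp_mor₁ {T : Triangle C} (hT : T ∈ distTriang C) (Y : C) :
    LinearMap.ker (Linear.leftComp k Y T.mor₁) = LinearMap.range (Linear.leftComp k Y T.mor₂) := by
  ext f
  constructor
  · intro hf
    obtain ⟨g, hg⟩ := T.yoneda_exact₂ hT f hf
    exact ⟨g, hg.symm⟩
  · rintro ⟨g, rfl⟩
    exact (comp_distTriang_mor_zero₁₂_assoc _ hT g).trans zero_comp

lemma Triangle.leftComp_mor₂_injective {T : Triangle C} (hT : T ∈ distTriang C) {Y : C}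
    (hY : ∀ g : T.obj₁⟦(1 : ℤ)⟧ ⟶ Y, T.mor₃ ≫ g = 0) :
    Function.Injective (Linear.leftComp k Y T.mor₂) := by
  refine (injective_iff_map_eq_zero _).2 fun f hf => ?_
  obtain ⟨g, rfl⟩ := T.yoneda_exact₃ hT f hf
  exact hY g

end Pretriangulated

end CategoryTheory

/-- Suppose the `k`-linear pretriangulated category `C` is Hom-finite.
Let `U ⟶ V ⟶ W ⟶ U⟦1⟧` be a distinguished triangle that is left almost split, with
`h ≠ 0` and `U` indecomposable with local endomorphism ring, and suppose `U ≇ U⟦1⟧`.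
Let `R` be the radical of `End U` (the non-invertible endomorphisms of `U`) and
`d = dim (End U)/R`. Then `dim End(U) + dim Hom(W,U) = dim Hom(V,U) + d`. -/
theorem dim_hom_defect_left_almost_split_of_not_iso_shift
    (k : Type*) [Field k] {C : Type u} [Category.{v} C] [Preadditive C] [Linear k C]
    [HasZeroObject C] [HasShift C ℤ] [∀ n : ℤ, (shiftFunctor C n).Additive]
    [Pretriangulated C] [HasBinaryBiproducts C]
    [∀ X Y : C, FiniteDimensional k (X ⟶ Y)]
    {U V W : C} (u : U ⟶ V) (v : V ⟶ W) (h : W ⟶ U⟦(1 : ℤ)⟧)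
    (hdist : Triangle.mk u v h ∈ distTriang C)
    (hlas : ∀ (X : C) (g : U ⟶ X), ¬ IsSplitMono g → ∃ t : V ⟶ X, u ≫ t = g)
    (hne : h ≠ 0) (hU : Indecomposable U) (hUloc : IsLocalRing (End U))
    (hshift : ¬ Nonempty (U ≅ U⟦(1 : ℤ)⟧))
    (R : Submodule k (U ⟶ U)) (hR : (R : Set (U ⟶ U)) = {f : U ⟶ U | ¬ IsIso f}) :
    Module.finrank k (U ⟶ U) + Module.finrank k (W ⟶ U) =
      Module.finrank k (V ⟶ U) + Module.finrank k ((U ⟶ U) ⧸ R) := by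
  have hu : ¬ IsSplitMono u := fun _ =>
    hne (Triangle.mor₃_eq_zero_of_mono₁ _ hdist (show Mono u from inferInstance))
  have hrange : LinearMap.range (Linear.leftComp k U u) = R := by
    refine SetLike.coe_injective ((IsLeftAlmostSplit.range_leftComp k hlas hu U).trans ?_)
    simp_rw [hR, isSplitMono_iff_isIso_of_isLocalRing_end]
  have hkill (g : U⟦(1 : ℤ)⟧ ⟶ U) : h ≫ g = 0 := by
    refine IsLeftAlmostSplit.mor₃_comp_eq_zero hdist hlas g fun hg => ?_
    have : IsSplitMono g := hg
    rcases isIso_or_isZero_of_isSplitMono_of_isLocalRing_end g with hiso | hzero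
    · exact hshift ⟨(asIso g).symm⟩
    · exact hne (hzero.eq_of_tgt _ _)
  have hker : LinearMap.ker (Linear.leftComp k U u) = LinearMap.range (Linear.leftComp k U v) :=
    Triangle.ker_leftComp_mor₁ k hdist U
  have hrank_W : Module.finrank k (LinearMap.range (Linear.leftComp k U v)) =
      Module.finrank k (W ⟶ U) :=
    LinearMap.finrank_range_of_inj (Triangle.leftComp_mor₂_injective k hdist hkill)
  have hrank_V := LinearMap.finrank_range_add_finrank_ker (Linear.leftComp k U u)
  have hrank_End := Submodule.finrank_quotient_add_finrank R
  rw [hrange, hker] at hrank_V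
  omega
end

section
/- Let n ≥ 1 and let c be a linear automorphism of the ℚ-vector space ℚ^n (functions Fin n → ℚ). Suppose there is a vector ν ∈ ℚ^n with ν(i) > 0 for every coordinate i, such that c(ν) = ν, and suppose there is an integer m ≥ 1 such that for every y ∈ ℚ^n the vector c^m(y) − y lies in the line ℚ·ν (i.e., the automorphism induced by c on ℚ^n/ℚν has order dividing m). If x ∈ ℚ^n satisfies (c^t(x))(i) ≥ 0 for every integer t ∈ ℤ and every coordinate i, then c^m(x) = x. -/
/-!
Write `c ^ m x = x + q • ν`. Since `ν` is fixed by `c`, the iterates `c ^ (m * k) x = x + (k * q) • ν`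
move along the line `ℚ • ν` at constant speed in both directions, so the `i`-th coordinate
`x i + k * (q * ν i)` stays nonnegative for all `k : ℤ` only if `q * ν i = 0`.
-/

theorem zpow_smul_eq_add_zsmul {G M : Type*} [Group G] [AddCommGroup M] [DistribMulAction G M]
    {g : G} {x v : M} (hv : g • v = v) (hx : g • x = x + v) (k : ℤ) :
    g ^ k • x = x + k • v := by
  have hvk (k : ℤ) : g ^ k • v = v :=
    MulAction.mem_stabilizer_iff.mp (zpow_mem (MulAction.mem_stabilizer_iff.mpr hv) k)
  have step (k : ℤ) : g ^ (k + 1) • x = g ^ k • x + v := by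
    rw [zpow_add_one, mul_smul, hx, smul_add, hvk]
  induction k using Int.induction_on with
  | zero => simp
  | succ k ih => rw [step, ih, add_zsmul, one_zsmul, add_assoc]
  | pred k ih =>
    have h := step (-k - 1)
    rw [sub_add_cancel, ih] at h
    rw [sub_zsmul, one_zsmul, eq_sub_of_add_eq h.symm]
    abel

theorem eq_zero_of_forall_add_zsmul_nonneg {α : Type*} [AddCommGroup α] [LinearOrder α]
    [IsOrderedAddMonoid α] [Archimedean α] {a w : α} (h : ∀ k : ℤ, 0 ≤ a + k • w) : w = 0 := by
  have exists_neg (w : α) (hw : 0 < w) : ∃ k : ℤ, a + k • w < 0 := by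
    obtain ⟨n, hn⟩ := Archimedean.arch a hw
    refine ⟨-(n + 1 : ℕ), ?_⟩
    calc a + (-(n + 1 : ℕ) : ℤ) • w = (a - n • w) - w := by
          rw [neg_zsmul, natCast_zsmul, succ_nsmul]; abel
      _ < 0 := sub_neg.mpr ((sub_nonpos.mpr hn).trans_lt hw)
  rcases lt_trichotomy w 0 with hw | hw | hw
  · obtain ⟨k, hk⟩ := exists_neg (-w) (neg_pos.mpr hw)
    exact absurd (h (-k)) (by rwa [neg_zsmul, ← zsmul_neg, not_le])
  · exact hw
  · obtain ⟨k, hk⟩ := exists_neg w hw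
    exact absurd (h k) hk.not_ge

theorem pow_fixed_of_forall_zpow_nonneg_general
    (n : ℕ) (c : (Fin n → ℚ) ≃ₗ[ℚ] (Fin n → ℚ))
    (ν : Fin n → ℚ) (hfix : c ν = ν)
    (m : ℕ)
    (hper : ∀ y : Fin n → ℚ, ∃ q : ℚ, (c ^ m) y - y = q • ν)
    (x : Fin n → ℚ) (hx : ∀ (t : ℤ) (i : Fin n), 0 ≤ ((c ^ t) x) i) :
    (c ^ m) x = x := by
  obtain ⟨q, hq⟩ := hper x
  have hshift : (c ^ m) • x = x + q • ν := eq_add_of_sub_eq' hq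
  have hfix_pow : (c ^ m) • (q • ν) = q • ν := by
    rw [LinearEquiv.smul_def, map_smul, LinearEquiv.pow_apply, Function.iterate_fixed hfix]
  have hiter (k : ℤ) : (c ^ ((m : ℤ) * k)) x = x + k • q • ν := by
    rw [zpow_mul, zpow_natCast, ← LinearEquiv.smul_def, zpow_smul_eq_add_zsmul hfix_pow hshift]
  ext i
  have hq_zero : q * ν i = 0 := eq_zero_of_forall_add_zsmul_nonneg (a := x i) fun k ↦ by
    simpa [hiter, mul_left_comm] using hx (m * k) i
  simpa [hq_zero, sub_eq_zero] using congrFun hq i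

/-- Let `n ≥ 1` and let `c` be a linear automorphism of `ℚ^n`.
Suppose there is a strictly positive vector `ν` fixed by `c`, and an integer `m ≥ 1`
such that for every `y` the vector `c^m y - y` lies in the line `ℚ • ν` (i.e. the
automorphism induced by `c` on `ℚ^n/ℚν` has order dividing `m`). If `x` satisfies
`(c^t x) i ≥ 0` for every integer `t` and every coordinate `i`, then `c^m x = x`. -/
theorem pow_fixed_of_forall_zpow_nonneg
    (n : ℕ) (hn : 1 ≤ n) (c : (Fin n → ℚ) ≃ₗ[ℚ] (Fin n → ℚ))
    (ν : Fin n → ℚ) (hν : ∀ i, 0 < ν i) (hfix : c ν = ν)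
    (m : ℕ) (hm : 1 ≤ m)
    (hper : ∀ y : Fin n → ℚ, ∃ q : ℚ, (c ^ m) y - y = q • ν)
    (x : Fin n → ℚ) (hx : ∀ (t : ℤ) (i : Fin n), 0 ≤ ((c ^ t) x) i) :
    (c ^ m) x = x :=
  pow_fixed_of_forall_zpow_nonneg_general n c ν hfix m hper x hx
end

section
/- Let n ≥ 1 and let c be a linear automorphism of the ℚ-vector space ℚ^n (functions Fin n → ℚ) such that c^m is the identity for some integer m ≥ 1 and the only vector fixed by c is 0. If x ∈ ℚ^n satisfies (c^t(x))(i) ≥ 0 for every natural number t and every coordinate i, then x = 0. -/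
/-- Let `n ≥ 1` and let `c` be a linear automorphism of `ℚ^n` such
that `c^m = 1` for some integer `m ≥ 1` and the only vector fixed by `c` is `0`.
If `x` satisfies `(c^t x) i ≥ 0` for every natural number `t` and every coordinate `i`,
then `x = 0`. -/
theorem eq_zero_of_forall_pow_nonneg_of_fixed_eq_zero
    (n : ℕ) (hn : 1 ≤ n) (c : (Fin n → ℚ) ≃ₗ[ℚ] (Fin n → ℚ))
    (m : ℕ) (hm : 1 ≤ m) (hcm : c ^ m = 1)
    (hfix : ∀ y : Fin n → ℚ, c y = y → y = 0)
    (x : Fin n → ℚ) (hx : ∀ (t : ℕ) (i : Fin n), 0 ≤ ((c ^ t) x) i) :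
    x = 0 := by
  set S : Fin n → ℚ := ∑ t ∈ Finset.range m, (c ^ t) x with hS
  have hmx : (c ^ m) x = x := by rw [hcm]; rfl
  have hcS : c S = S := by
    have : c S = ∑ t ∈ Finset.range m, (c ^ (t + 1)) x := by
      rw [hS, map_sum]
      refine Finset.sum_congr rfl fun t _ => ?_
      rw [pow_succ']
      rfl
    obtain ⟨k, rfl⟩ : ∃ k, m = k + 1 := ⟨m - 1, by omega⟩
    rw [this, Finset.sum_range_succ, hS, Finset.sum_range_succ', hmx]
    simp [add_comm]
  have hS0 : S = 0 := hfix S hcS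
  have hx0 : ∀ i, x i = 0 := by
    intro i
    have hsum : ∑ t ∈ Finset.range m, ((c ^ t) x) i = 0 := by
      have := congrFun hS0 i
      simpa [hS, Finset.sum_apply] using this
    have := (Finset.sum_eq_zero_iff_of_nonneg (fun t _ => hx t i)).mp hsum
      0 (Finset.mem_range.mpr hm)
    simpa using this
  funext i; exact hx0 i
end
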